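/- Let γ : ℝ → ℝ² be a twice continuously differentiable curve with ‖γ'(s)‖ = 1 for all s, let ℓ : ℝ → ℝ be continuously differentiable, and define the potential V(p) = ∫₀^p q ℓ'(q) dq. For a point X ∈ ℝ² set p_X(s) = ⟪γ(s) − X, γ'(s)⟫ / ‖γ(s) − X‖ whenever γ(s) ≠ X. Fix points A, B ∈ ℝ² and define f_{A,B}(s) = ‖A − γ(s)‖ + V(p_A(s)) + ‖γ(s + ℓ(p_A(s))) − B‖. Then at every s₀ with γ(s₀) ≠ A and γ(s₀ + ℓ(p_A(s₀))) ≠ B, f_{A,B} is differentiable and f_{A,B}'(s₀) = (p_A(s₀) + p_B(s₀ + ℓ(p_A(s₀)))) · (1 + ℓ'(p_A(s₀)) · p_A'(s₀)). In particular, if s₀ is a critical point of f_{A,B} at which 1 + ℓ'(p_A(s₀)) p_A'(s₀) ≠ 0, then p_A(s₀) + p_B(s₀ + ℓ(p_A(s₀))) = 0, which is the pensive billiard reflection law (equality of the angles of incidence and reflection). -/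

import Mathlib

open scoped RealInnerProductSpace

/-!
The derivative of `s ↦ ‖γ s - X‖` is the cosine `p_X s`, so the first term of `f` contributes
`p_A`, and by the chain rule the last one contributes `p_B(t) · (1 + ℓ'(p_A) p_A')` with
`t = s + ℓ(p_A s)`. The potential is chosen so that `V'(p) = p ℓ'(p)`: the middle term then
contributes `p_A ℓ'(p_A) p_A'`, which together with the first term gives
`p_A (1 + ℓ'(p_A) p_A')`, and the whole derivative factors.
-/

section InnerProductSpace

variable {E : Type*} [NormedAddCommGroup E] [InnerProductSpace ℝ E]

theorem HasDerivAt.norm {u : ℝ → E} {v : E} {t : ℝ} (hu : HasDerivAt u v t) (h0 : u t ≠ 0) :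
    HasDerivAt (fun s => ‖u s‖) (⟪u t, v⟫ / ‖u t‖) t := by
  have hpos : 0 < ‖u t‖ := norm_pos_iff.mpr h0
  have h := hu.norm_sq.sqrt (by positivity)
  simp only [Real.sqrt_sq (norm_nonneg _)] at h
  convert h using 1
  field_simp

theorem HasDerivAt.norm_sub_const {γ : ℝ → E} {v X : E} {t : ℝ} (hγ : HasDerivAt γ v t)
    (hX : γ t ≠ X) :
    HasDerivAt (fun s => ‖γ s - X‖) (⟪γ t - X, v⟫ / ‖γ t - X‖) t :=
  (hγ.sub_const X).norm (sub_ne_zero.mpr hX)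

theorem DifferentiableAt.inner_sub_const_div_norm {γ v : ℝ → E} {X : E} {t : ℝ}
    (hγ : DifferentiableAt ℝ γ t) (hv : DifferentiableAt ℝ v t) (hX : γ t ≠ X) :
    DifferentiableAt ℝ (fun s => ⟪γ s - X, v s⟫ / ‖γ s - X‖) t :=
  ((hγ.sub_const X).inner ℝ hv).div ((hγ.sub_const X).norm ℝ (sub_ne_zero.mpr hX))
    (norm_ne_zero_iff.mpr (sub_ne_zero.mpr hX))

end InnerProductSpace

theorem pensive_billiard_variational_principle
    (γ : ℝ → EuclideanSpace ℝ (Fin 2)) (hγ : ContDiff ℝ 2 γ)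
    (ℓ : ℝ → ℝ) (hℓ : ContDiff ℝ 1 ℓ)
    (V : ℝ → ℝ) (hV : ∀ p, V p = ∫ q in (0:ℝ)..p, q * deriv ℓ q)
    (pX : EuclideanSpace ℝ (Fin 2) → ℝ → ℝ)
    (hpX : ∀ X s, pX X s = (inner ℝ (γ s - X) (deriv γ s) : ℝ) / ‖γ s - X‖)
    (A B : EuclideanSpace ℝ (Fin 2))
    (f : ℝ → ℝ)
    (hf : ∀ s, f s = ‖A - γ s‖ + V (pX A s) + ‖γ (s + ℓ (pX A s)) - B‖)
    (s₀ : ℝ) (hA : γ s₀ ≠ A) (hB : γ (s₀ + ℓ (pX A s₀)) ≠ B) :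
    HasDerivAt f
      ((pX A s₀ + pX B (s₀ + ℓ (pX A s₀))) *
        (1 + deriv ℓ (pX A s₀) * deriv (pX A) s₀)) s₀ ∧
    (deriv f s₀ = 0 → 1 + deriv ℓ (pX A s₀) * deriv (pX A) s₀ ≠ 0 →
      pX A s₀ + pX B (s₀ + ℓ (pX A s₀)) = 0) := by
  have hγd : Differentiable ℝ γ := hγ.differentiable two_ne_zero
  have hdist : ∀ X t, γ t ≠ X → HasDerivAt (fun s => ‖γ s - X‖) (pX X t) t :=
    fun X t hX => hpX X t ▸ HasDerivAt.norm_sub_const (hγd t).hasDerivAt hX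
  have hpA : HasDerivAt (pX A) (deriv (pX A) s₀) s₀ := by
    rw [funext (hpX A)]
    exact (DifferentiableAt.inner_sub_const_div_norm (hγd s₀) (hγ.differentiable_deriv_two s₀)
      hA).hasDerivAt
  have hV' : ∀ p, HasDerivAt V (p * deriv ℓ p) p := fun p => by
    rw [funext hV]
    exact (continuous_id.mul hℓ.continuous_deriv_one).integral_hasStrictDerivAt 0 p |>.hasDerivAt
  have hfirst : HasDerivAt (fun s => ‖A - γ s‖) (pX A s₀) s₀ := by
    simpa only [norm_sub_rev A] using hdist A s₀ hA
  have hshift : HasDerivAt (fun s => s + ℓ (pX A s))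
      (1 + deriv ℓ (pX A s₀) * deriv (pX A) s₀) s₀ :=
    (hasDerivAt_id s₀).add ((hℓ.differentiable one_ne_zero _).hasDerivAt.comp s₀ hpA)
  have hfA : HasDerivAt f ((pX A s₀ + pX B (s₀ + ℓ (pX A s₀))) *
      (1 + deriv ℓ (pX A s₀) * deriv (pX A) s₀)) s₀ := by
    rw [funext hf]
    refine ((hfirst.add ((hV' _).comp s₀ hpA)).add
      ((hdist B _ hB).comp s₀ hshift)).congr_deriv ?_
    ring
  exact ⟨hfA, fun hcrit hne => (mul_eq_zero.mp (hfA.deriv ▸ hcrit)).resolve_right hne⟩
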